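/- arXiv:1808.10621 — 3 statements merged into one kernel-verified Lean document; each statement's English description precedes it below -/
import Mathlib

section
/- Let r > 0, p ∈ ℝ³, and let T be the inversion in the sphere of radius r centered at p, T x = (r²/|x − p|²)(x − p) + p for x ≠ p. Then for every Borel set s ⊆ ℝ³ \ {p}, the 2-dimensional Hausdorff measure satisfies H²(T(s)) = ∫_s (r²/|x − p|²)² dH²(x). (This is the change of variables formula dS(x*) = (r⁴/|x|⁴) dS(x) for surface measure under inversion.) -/
/-!
Inversion `T` in the sphere of centre `c` and radius `R` is conformal with factor
`φ x = R² / |x - c|²`: `dist (T x) (T y) = R² / (|x - c| |y - c|) * dist x y`. Hence on a set `A`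
where `a ≤ φ ≤ b`, `T` is `b`-Lipschitz, and since `T` is an involution with `φ (T x) = (φ x)⁻¹`,
it is `a⁻¹`-Lipschitz on `T A`; so `a^d H^d(A) ≤ H^d(T A) ≤ b^d H^d(A)`. Cutting `s` into the
shells `t^n ≤ φ < t^(n+1)` shows that the measure `A ↦ H^d(T A)` and `∫_A φ^d dH^d` agree on `s`
up to a factor `t^d`, and letting `t → 1` gives equality.
-/

open MeasureTheory Set Filter Topology EuclideanGeometry
open scoped ENNReal NNReal

theorem ENNReal.le_of_forall_one_lt_le_rpow_mul {x y : ℝ≥0∞} {d : ℝ}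
    (h : ∀ t : ℝ≥0, 1 < t → x ≤ (t : ℝ≥0∞) ^ d * y) : x ≤ y := by
  have hpow : Tendsto (fun t : ℝ≥0 => (t : ℝ≥0∞) ^ d) (𝓝[>] 1) (𝓝 1) := by
    have hcont : Continuous fun t : ℝ≥0 => (t : ℝ≥0∞) ^ d :=
      ENNReal.continuous_rpow_const.comp ENNReal.continuous_coe
    simpa using (hcont.tendsto 1).mono_left nhdsWithin_le_nhds
  have hlim : Tendsto (fun t : ℝ≥0 => (t : ℝ≥0∞) ^ d * y) (𝓝[>] 1) (𝓝 y) := by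
    simpa using ENNReal.Tendsto.mul_const hpow (Or.inl one_ne_zero)
  exact ge_of_tendsto hlim (eventually_nhdsWithin_of_forall h)

section DensityComparison

variable {α : Type*} [MeasurableSpace α] {μ ν : Measure α}

theorem measure_le_mul_of_le_mul_on_Ico_zpow {f : α → ℝ≥0∞} (hf : Measurable f) {s : Set α}
    (hs : MeasurableSet s) {t : ℝ≥0} (ht : 1 < t) {C : ℝ≥0∞}
    (h0 : ν (s ∩ f ⁻¹' {0}) ≤ C * μ (s ∩ f ⁻¹' {0}))
    (htop : ν (s ∩ f ⁻¹' {∞}) ≤ C * μ (s ∩ f ⁻¹' {∞}))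
    (hn : ∀ n : ℤ, ν (s ∩ f ⁻¹' Ico ((t : ℝ≥0∞) ^ n) ((t : ℝ≥0∞) ^ (n + 1))) ≤
      C * μ (s ∩ f ⁻¹' Ico ((t : ℝ≥0∞) ^ n) ((t : ℝ≥0∞) ^ (n + 1)))) :
    ν s ≤ C * μ s := by
  rw [measure_eq_measure_preimage_add_measure_tsum_Ico_zpow ν hf hs ht,
    measure_eq_measure_preimage_add_measure_tsum_Ico_zpow μ hf hs ht, mul_add, mul_add,
    ← ENNReal.tsum_mul_left]
  exact add_le_add (add_le_add h0 htop) (ENNReal.tsum_le_tsum hn)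

variable {φ : α → ℝ≥0∞} {d : ℝ} {s : Set α}

theorem measure_le_mul_withDensity_and_withDensity_le_mul_measure (hφ : Measurable φ)
    (hd : 0 ≤ d) {A : Set α} (hA : MeasurableSet A) {a t : ℝ≥0}
    (haφ : ∀ x ∈ A, (a : ℝ≥0∞) ≤ φ x ∧ φ x ≤ ↑(t * a))
    (hle : ν A ≤ ↑(t * a) ^ d * μ A) (hge : (a : ℝ≥0∞) ^ d * μ A ≤ ν A) :
    ν A ≤ t ^ d * μ.withDensity (fun x => φ x ^ d) A ∧
      μ.withDensity (fun x => φ x ^ d) A ≤ t ^ d * ν A := by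
  have hsplit : (↑(t * a) : ℝ≥0∞) ^ d * μ A = t ^ d * ((a : ℝ≥0∞) ^ d * μ A) := by
    rw [ENNReal.coe_mul, ENNReal.mul_rpow_of_nonneg _ _ hd, mul_assoc]
  have hρge : (a : ℝ≥0∞) ^ d * μ A ≤ μ.withDensity (fun x => φ x ^ d) A := by
    rw [withDensity_apply _ hA, ← setLIntegral_const]
    exact setLIntegral_mono (hφ.pow_const d) fun x hx => ENNReal.rpow_le_rpow (haφ x hx).1 hd
  have hρle : μ.withDensity (fun x => φ x ^ d) A ≤ ↑(t * a) ^ d * μ A := by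
    rw [withDensity_apply _ hA, ← setLIntegral_const]
    exact setLIntegral_mono measurable_const fun x hx => ENNReal.rpow_le_rpow (haφ x hx).2 hd
  rw [hsplit] at hle hρle
  exact ⟨hle.trans (by gcongr), hρle.trans (by gcongr)⟩

theorem measure_eq_setLIntegral_rpow_of_bounds (hφ : Measurable φ) (hd : 0 ≤ d)
    (hs : MeasurableSet s) (hφs : ∀ x ∈ s, φ x ≠ 0 ∧ φ x ≠ ∞)
    (hle : ∀ A ⊆ s, MeasurableSet A → ∀ b : ℝ≥0, (∀ x ∈ A, φ x ≤ b) →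
      ν A ≤ (b : ℝ≥0∞) ^ d * μ A)
    (hge : ∀ A ⊆ s, MeasurableSet A → ∀ a : ℝ≥0, a ≠ 0 → (∀ x ∈ A, (a : ℝ≥0∞) ≤ φ x) →
      (a : ℝ≥0∞) ^ d * μ A ≤ ν A) :
    ν s = ∫⁻ x in s, φ x ^ d ∂μ := by
  rw [← withDensity_apply _ hs]
  set ρ := μ.withDensity fun x => φ x ^ d
  have hzero : s ∩ φ ⁻¹' {0} = ∅ := eq_empty_of_forall_notMem fun x hx => (hφs x hx.1).1 hx.2
  have htop : s ∩ φ ⁻¹' {∞} = ∅ := eq_empty_of_forall_notMem fun x hx => (hφs x hx.1).2 hx.2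
  have hfactor : ∀ t : ℝ≥0, 1 < t → ν s ≤ t ^ d * ρ s ∧ ρ s ≤ t ^ d * ν s := by
    intro t ht
    have ht0 : t ≠ 0 := (zero_lt_one.trans ht).ne'
    set P : ℤ → Set α := fun n => s ∩ φ ⁻¹' Ico ((t : ℝ≥0∞) ^ n) ((t : ℝ≥0∞) ^ (n + 1))
    have hshell : ∀ n, ν (P n) ≤ t ^ d * ρ (P n) ∧ ρ (P n) ≤ t ^ d * ν (P n) := by
      intro n
      have hP : MeasurableSet (P n) := hs.inter (hφ measurableSet_Ico)
      have hbounds : ∀ x ∈ P n, ((t ^ n : ℝ≥0) : ℝ≥0∞) ≤ φ x ∧ φ x ≤ ↑(t * t ^ n) := by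
        rintro x ⟨-, hlo, hhi⟩
        rw [mul_comm, ← zpow_add_one₀ ht0, ENNReal.coe_zpow ht0, ENNReal.coe_zpow ht0]
        exact ⟨hlo, hhi.le⟩
      exact measure_le_mul_withDensity_and_withDensity_le_mul_measure hφ hd hP hbounds
        (hle _ inter_subset_left hP _ fun x hx => (hbounds x hx).2)
        (hge _ inter_subset_left hP _ (zpow_ne_zero n ht0) fun x hx => (hbounds x hx).1)
    constructor
    · exact measure_le_mul_of_le_mul_on_Ico_zpow hφ hs ht (by simp [hzero]) (by simp [htop])
        fun n => (hshell n).1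
    · exact measure_le_mul_of_le_mul_on_Ico_zpow hφ hs ht (by simp [hzero]) (by simp [htop])
        fun n => (hshell n).2
  exact le_antisymm (ENNReal.le_of_forall_one_lt_le_rpow_mul fun t ht => (hfactor t ht).1)
    (ENNReal.le_of_forall_one_lt_le_rpow_mul fun t ht => (hfactor t ht).2)

end DensityComparison

section Inversion

variable {E : Type*} [NormedAddCommGroup E] [InnerProductSpace ℝ E] {c : E} {R : ℝ} {A : Set E}

theorem lipschitzOnWith_inversion (hcA : c ∉ A) {L : ℝ}
    (hL : ∀ x ∈ A, (R / dist x c) ^ 2 ≤ L) : LipschitzOnWith L.toNNReal (inversion c R) A := by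
  refine LipschitzOnWith.of_dist_le' fun x hx y hy => ?_
  rw [dist_inversion_inversion (ne_of_mem_of_not_mem hx hcA) (ne_of_mem_of_not_mem hy hcA)]
  gcongr
  calc R ^ 2 / (dist x c * dist y c) = (R / dist x c) * (R / dist y c) := by
        rw [div_mul_div_comm, sq]
    _ ≤ ((R / dist x c) ^ 2 + (R / dist y c) ^ 2) / 2 := by
        nlinarith [sq_nonneg (R / dist x c - R / dist y c)]
    _ ≤ L := by linarith [hL x hx, hL y hy]

theorem sq_div_dist_inversion_center (hR : R ≠ 0) {x : E} (hx : x ≠ c) :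
    (R / dist (inversion c R x) c) ^ 2 = ((R / dist x c) ^ 2)⁻¹ := by
  have : dist x c ≠ 0 := dist_ne_zero.2 hx
  rw [dist_inversion_center]
  field_simp

variable [MeasurableSpace E] [BorelSpace E]

theorem measurable_inversion : Measurable (inversion c R) := by
  unfold inversion
  fun_prop

variable {d : ℝ}

theorem hausdorffMeasure_image_inversion_le (hd : 0 ≤ d) (hcA : c ∉ A) {b : ℝ≥0}
    (hb : ∀ x ∈ A, (R / dist x c) ^ 2 ≤ b) :
    μH[d] (inversion c R '' A) ≤ (b : ℝ≥0∞) ^ d * μH[d] A := by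
  simpa using (lipschitzOnWith_inversion hcA hb).hausdorffMeasure_image_le hd

theorem le_hausdorffMeasure_image_inversion (hR : R ≠ 0) (hd : 0 ≤ d) (hcA : c ∉ A) {a : ℝ≥0}
    (ha : a ≠ 0) (haA : ∀ x ∈ A, a ≤ (R / dist x c) ^ 2) :
    (a : ℝ≥0∞) ^ d * μH[d] A ≤ μH[d] (inversion c R '' A) := by
  have hcTA : c ∉ inversion c R '' A := by
    rintro ⟨x, hx, hxc⟩
    exact hcA ((inversion_eq_center hR).1 hxc ▸ hx)
  have hTA : ∀ y ∈ inversion c R '' A, (R / dist y c) ^ 2 ≤ (a⁻¹ : ℝ≥0) := by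
    rintro _ ⟨x, hx, rfl⟩
    rw [sq_div_dist_inversion_center hR (ne_of_mem_of_not_mem hx hcA), NNReal.coe_inv]
    exact inv_anti₀ (by positivity) (haA x hx)
  have hback := hausdorffMeasure_image_inversion_le hd hcTA hTA
  simp only [image_image, inversion_inversion c hR, image_id'] at hback
  calc (a : ℝ≥0∞) ^ d * μH[d] A
      ≤ (a : ℝ≥0∞) ^ d * ((a⁻¹ : ℝ≥0) ^ d * μH[d] (inversion c R '' A)) := by gcongr
    _ = μH[d] (inversion c R '' A) := by
        rw [← mul_assoc, ← ENNReal.mul_rpow_of_nonneg _ _ hd, ← ENNReal.coe_mul, mul_inv_cancel₀ ha,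
          ENNReal.coe_one, ENNReal.one_rpow, one_mul]

theorem hausdorffMeasure_image_inversion (hR : R ≠ 0) (hd : 0 ≤ d) {s : Set E}
    (hs : MeasurableSet s) (hcs : c ∉ s) :
    μH[d] (inversion c R '' s) = ∫⁻ x in s, ENNReal.ofReal ((R / dist x c) ^ 2) ^ d ∂μH[d] := by
  have hT := inversion_involutive c hR
  have himage : ∀ A, MeasurableSet A → MeasurableSet (inversion c R '' A) := fun A hA => by
    rw [hT.image_eq_preimage_symm]
    exact measurable_inversion hA
  have hcomap : ∀ A, MeasurableSet A →
      μH[d] (inversion c R '' A) = (μH[d]).comap (inversion c R) A :=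
    fun A hA => (Measure.comap_apply _ hT.injective himage _ hA).symm
  rw [hcomap s hs]
  refine measure_eq_setLIntegral_rpow_of_bounds (by fun_prop) hd hs
    (fun x hx => ⟨?_, ENNReal.ofReal_ne_top⟩) ?_ ?_
  · have : dist x c ≠ 0 := dist_ne_zero.2 (ne_of_mem_of_not_mem hx hcs)
    simp only [ne_eq, ENNReal.ofReal_eq_zero, not_le]
    positivity
  · intro A hAs hA b hb
    rw [← hcomap A hA]
    refine hausdorffMeasure_image_inversion_le hd (notMem_subset hAs hcs) fun x hx => ?_
    simpa using hb x hx
  · intro A hAs hA a ha haA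
    rw [← hcomap A hA]
    refine le_hausdorffMeasure_image_inversion hR hd (notMem_subset hAs hcs) ha fun x hx => ?_
    exact (ENNReal.le_ofReal_iff_toReal_le ENNReal.coe_ne_top (sq_nonneg _)).1 (haA x hx)

end Inversion

/-- Change of variables for surface measure (2-dimensional Hausdorff measure) in `ℝ³` under
inversion in the sphere of radius `r` centered at `p`:
`H²(T(s)) = ∫_s (r²/|x − p|²)² dH²(x)` for Borel sets `s ⊆ ℝ³ \ {p}`. -/
theorem hausdorff_two_inversion_dim3
    (r : ℝ) (hr : 0 < r) (p : EuclideanSpace ℝ (Fin 3))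
    (T : EuclideanSpace ℝ (Fin 3) → EuclideanSpace ℝ (Fin 3))
    (hT : ∀ x : EuclideanSpace ℝ (Fin 3), x ≠ p →
      T x = (r ^ 2 / ‖x - p‖ ^ 2) • (x - p) + p)
    (s : Set (EuclideanSpace ℝ (Fin 3))) (hs : MeasurableSet s) (hps : p ∉ s) :
    μH[2] (T '' s) = ∫⁻ x in s, ENNReal.ofReal ((r ^ 2 / ‖x - p‖ ^ 2) ^ 2) ∂μH[2] := by
  have hTs : T '' s = inversion p r '' s := image_congr fun x hx => by
    rw [hT x (ne_of_mem_of_not_mem hx hps), inversion, div_pow, dist_eq_norm, vsub_eq_sub,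
      vadd_eq_add]
  rw [hTs, hausdorffMeasure_image_inversion hr.ne' zero_le_two hs hps]
  refine lintegral_congr fun x => ?_
  rw [div_pow, dist_eq_norm, ENNReal.rpow_two, ← ENNReal.ofReal_pow (by positivity)]
end

section
/- Let r > 0 and let T be the inversion in the sphere of radius r centered at the origin of ℝ². For x ≠ 0 let R_x := I − 2(x/|x|)(x/|x|)ᵗ be the reflection matrix. Then for all nonzero x, y ∈ ℝ² with x ≠ y and every n ∈ ℝ², ⟨R_x n, (Tx − Ty)/(2π|Tx − Ty|²)⟩ = (|x|²/r²) ⟨n, (x − y)/(2π|x − y|²) − x/(2π|x|²)⟩. Equivalently, ⟨R_x n, ∇Γ(Tx − Ty)⟩ = (|x|²/r²)⟨n, ∇Γ(x−y) − ∇Γ(x)⟩. -/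
open scoped Real RealInnerProductSpace

/-!
The reflection `R_x` is self-adjoint, so the left side is `⟨n, R_x ∇Γ(Tx − Ty)⟩`. Inversion
scales distances as `|Tx − Ty| = r²|x − y| / (|x||y|)`, and since `R_x x = −x` one finds
`R_x (Tx − Ty) = (r²/|y|²) ((x − y) − (|x − y|²/|x|²) x)`, which is `r²|x − y|²/|y|²` times
`2π (∇Γ(x − y) − ∇Γ(x))`.
-/

section

variable {E : Type*} [NormedAddCommGroup E] [InnerProductSpace ℝ E]

theorem Submodule.reflection_orthogonal_singleton_apply (x v : E) :
    (ℝ ∙ x)ᗮ.reflection v = v - (2 * ⟪x, v⟫ / ‖x‖ ^ 2) • x := by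
  rw [reflection_orthogonal_apply, reflection_singleton_apply]
  simp only [RCLike.ofReal_real_eq_id, id_eq]
  module

theorem Submodule.inner_reflection_left (K : Submodule ℝ E) [K.HasOrthogonalProjection]
    (v w : E) : ⟪K.reflection v, w⟫ = ⟪v, K.reflection w⟫ := by
  conv_lhs => rw [← reflection_reflection K w]
  exact K.reflection.inner_map_map v (K.reflection w)

theorem norm_div_norm_sq_smul_sub {x y : E} (hx : x ≠ 0) (hy : y ≠ 0) (r : ℝ) :
    ‖(r ^ 2 / ‖x‖ ^ 2) • x - (r ^ 2 / ‖y‖ ^ 2) • y‖ = r ^ 2 / (‖x‖ * ‖y‖) * ‖x - y‖ := by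
  simpa only [div_pow, dist_eq_norm] using dist_div_norm_sq_smul hx hy r

theorem reflection_div_norm_sq_smul_sub {x y : E} (hx : x ≠ 0) (hy : y ≠ 0) (r : ℝ) :
    (ℝ ∙ x)ᗮ.reflection ((r ^ 2 / ‖x‖ ^ 2) • x - (r ^ 2 / ‖y‖ ^ 2) • y) =
      (r ^ 2 / ‖y‖ ^ 2) • ((x - y) - (‖x - y‖ ^ 2 / ‖x‖ ^ 2) • x) := by
  have hx' : ‖x‖ ≠ 0 := norm_ne_zero_iff.mpr hx
  have hy' : ‖y‖ ≠ 0 := norm_ne_zero_iff.mpr hy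
  rw [map_sub, map_smul, map_smul, Submodule.reflection_orthogonalComplement_singleton_eq_neg,
    Submodule.reflection_orthogonal_singleton_apply, norm_sub_sq_real]
  match_scalars <;> field_simp; ring

noncomputable def gradFundamentalSolution (z : E) : E :=
  (2 * π * ‖z‖ ^ 2)⁻¹ • z

theorem reflection_gradFundamentalSolution_div_norm_sq_smul_sub {x y : E} (hx : x ≠ 0)
    (hy : y ≠ 0) (hxy : x ≠ y) {r : ℝ} (hr : r ≠ 0) :
    (ℝ ∙ x)ᗮ.reflection
        (gradFundamentalSolution ((r ^ 2 / ‖x‖ ^ 2) • x - (r ^ 2 / ‖y‖ ^ 2) • y)) =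
      (‖x‖ ^ 2 / r ^ 2) • (gradFundamentalSolution (x - y) - gradFundamentalSolution x) := by
  have hx' : ‖x‖ ≠ 0 := norm_ne_zero_iff.mpr hx
  have hy' : ‖y‖ ≠ 0 := norm_ne_zero_iff.mpr hy
  have hxy' : ‖x - y‖ ≠ 0 := norm_ne_zero_iff.mpr (sub_ne_zero.mpr hxy)
  unfold gradFundamentalSolution
  rw [map_smul, reflection_div_norm_sq_smul_sub hx hy, norm_div_norm_sq_smul_sub hx hy]
  match_scalars <;> field_simp

end

/-- Transformation of the gradient of the 2D fundamental solution
`∇Γ(z) = z/(2π|z|²)` under inversion in a sphere centered at the origin: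
`⟨R_x n, ∇Γ(Tx − Ty)⟩ = (|x|²/r²)⟨n, ∇Γ(x−y) − ∇Γ(x)⟩`,
where `R_x = I − 2(x/|x|)(x/|x|)ᵗ` is the reflection matrix. -/
theorem grad_fundamental_solution_inversion_dim2
    (r : ℝ) (hr : 0 < r)
    (T : EuclideanSpace ℝ (Fin 2) → EuclideanSpace ℝ (Fin 2))
    (hT : ∀ x : EuclideanSpace ℝ (Fin 2), x ≠ 0 → T x = (r ^ 2 / ‖x‖ ^ 2) • x)
    (R : EuclideanSpace ℝ (Fin 2) → EuclideanSpace ℝ (Fin 2) → EuclideanSpace ℝ (Fin 2))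
    (hR : ∀ x v : EuclideanSpace ℝ (Fin 2), x ≠ 0 →
      R x v = v - (2 * ⟪x, v⟫ / ‖x‖ ^ 2) • x)
    (x y : EuclideanSpace ℝ (Fin 2)) (hx : x ≠ 0) (hy : y ≠ 0) (hxy : x ≠ y)
    (n : EuclideanSpace ℝ (Fin 2)) :
    ⟪R x n, (2 * π * ‖T x - T y‖ ^ 2)⁻¹ • (T x - T y)⟫ =
      (‖x‖ ^ 2 / r ^ 2) *
        ⟪n, (2 * π * ‖x - y‖ ^ 2)⁻¹ • (x - y) - (2 * π * ‖x‖ ^ 2)⁻¹ • x⟫ := by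
  have hRx : R x n = (ℝ ∙ x)ᗮ.reflection n := by
    rw [hR x n hx, Submodule.reflection_orthogonal_singleton_apply]
  rw [hRx, hT x hx, hT y hy]
  change ⟪_, gradFundamentalSolution _⟫ =
    _ * ⟪n, gradFundamentalSolution (x - y) - gradFundamentalSolution x⟫
  rw [Submodule.inner_reflection_left,
    reflection_gradFundamentalSolution_div_norm_sq_smul_sub hx hy hxy hr.ne',
    real_inner_smul_right]
end

section
/- Let Ω ⊆ ℝ³ be a bounded open set with 0 ∉ ∂Ω, r > 0, T the inversion in the sphere of radius r centered at the origin, σ the 2-dimensional Hausdorff measure restricted to ∂Ω, and σ* the 2-dimensional Hausdorff measure restricted to ∂Ω* := T(∂Ω). Let φ, ψ : ℝ³ → ℝ be bounded Borel measurable with σ(∂Ω) < ∞, and define φ*(T y) := φ(y)|y|³/r³ and ψ*(T y) := ψ(y)|y|³/r³ on ∂Ω*. If (x,y) ↦ Γ(x − y)φ(x)ψ(y) is integrable with respect to σ × σ, then ∫_{∂Ω*}∫_{∂Ω*} Γ(w − z) φ*(w) ψ*(z) dσ*(z) dσ*(w) = ∫_{∂Ω}∫_{∂Ω} Γ(x −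 y) φ(x) ψ(y) dσ(y) dσ(x), where Γ(z) = −1/(4π|z|). (Hence the map φ ↦ φ* preserves the single-layer-potential bilinear form ⟨φ,ψ⟩ = −∫ φ S[ψ] dσ in three dimensions.) -/
open MeasureTheory Set Filter Topology Function
open scoped Real ENNReal

/-!
Inversion is conformal: `dist (T x) (T y) = R² / (|x - c| |y - c|) * dist x y`. On a shell
`a ≤ |x - c| < t a` it is therefore Lipschitz with constant `R² / a²`, and its inverse (itself) is
Lipschitz on the image with constant `t² a² / R²`, so there the `d`-dimensional Hausdorff measure
of `T '' A` agrees with `∫_A (R² / |x - c|²) ^ d` up to the factor `t ^ (2 d)`. Summing over the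
shells `t ^ k ≤ |x - c| < t ^ (k + 1)` and letting `t → 1` gives the change of variables with
Jacobian `(R² / |x - c|²) ^ d`. For `d = 2` and `c = 0` the Jacobians `(r² / |x|²)² (r² / |y|²)²`,
the weights `|x|³ |y|³ / r⁶` and the factor `|x| |y| / r²` of the kernel `1 / |T x - T y|` cancel.
-/

theorem ENNReal.le_of_forall_one_lt_le_mul {g : ℝ → ℝ≥0∞} (hg : Tendsto g (𝓝[>] 1) (𝓝 1))
    {a b : ℝ≥0∞} (h : ∀ t : ℝ, 1 < t → a ≤ g t * b) : a ≤ b := by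
  rcases eq_or_ne b ⊤ with rfl | hb
  · exact le_top
  have hlim : Tendsto (fun t => g t * b) (𝓝[>] 1) (𝓝 b) := by
    simpa using ENNReal.Tendsto.mul_const hg (Or.inr hb)
  exact ge_of_tendsto hlim (eventually_nhdsWithin_of_forall h)

theorem MeasureTheory.measure_iUnion_le_mul {X ι : Type*} [MeasurableSpace X] [Countable ι]
    {μ ν : Measure X} {A : ι → Set X} (hA : ∀ i, MeasurableSet (A i))
    (hdisj : Pairwise (Disjoint on A)) {C : ℝ≥0∞} (h : ∀ i, ν (A i) ≤ C * μ (A i)) :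
    ν (⋃ i, A i) ≤ C * μ (⋃ i, A i) := by
  rw [measure_iUnion hdisj hA, measure_iUnion hdisj hA, ← ENNReal.tsum_mul_left]
  exact ENNReal.tsum_le_tsum h

theorem MeasureTheory.measure_le_mul_of_forall_shell {X : Type*} [MetricSpace X]
    [MeasurableSpace X] [OpensMeasurableSpace X] {μ ν : Measure X} {c : X} {s : Set X}
    (hs : MeasurableSet s) (hc : c ∉ s) {t : ℝ} (ht : 1 < t) {C : ℝ≥0∞}
    (h : ∀ A, MeasurableSet A → ∀ a > 0, (∀ x ∈ A, a ≤ dist x c ∧ dist x c < t * a) →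
      ν A ≤ C * μ A) :
    ν s ≤ C * μ s := by
  set shell : ℤ → Set X := fun k => s ∩ (dist · c) ⁻¹' Ico (t ^ k) (t ^ (k + 1))
  have hcover : ⋃ k, shell k = s := by
    refine subset_antisymm (iUnion_subset fun k => inter_subset_left) fun x hx => ?_
    obtain ⟨k, hk⟩ := exists_mem_Ico_zpow (dist_pos.2 (ne_of_mem_of_not_mem hx hc)) ht
    exact mem_iUnion.2 ⟨k, hx, hk⟩
  have hmeas : ∀ k, MeasurableSet (shell k) := fun k =>
    hs.inter ((continuous_id.dist continuous_const).measurable measurableSet_Ico)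
  have hdisj : Pairwise (Disjoint on shell) := fun k l hkl =>
    (((zpow_right_mono₀ ht.le).pairwise_disjoint_on_Ico_succ hkl).preimage _).mono
      inter_subset_right inter_subset_right
  rw [← hcover]
  refine measure_iUnion_le_mul hmeas hdisj fun k =>
    h _ (hmeas k) (t ^ k) (zpow_pos (zero_lt_one.trans ht) k) fun x hx => ?_
  rw [mul_comm, ← zpow_add_one₀ (zero_lt_one.trans ht).ne']
  exact hx.2

namespace EuclideanGeometry

variable {V P : Type*} [NormedAddCommGroup V] [InnerProductSpace ℝ V] [MetricSpace P]
  [NormedAddTorsor V P] {c : P} {R : ℝ}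

theorem lipschitzOnWith_inversion {s : Set P} {a : ℝ} (ha : 0 < a)
    (hs : ∀ x ∈ s, a ≤ dist x c) :
    LipschitzOnWith (R ^ 2 / a ^ 2).toNNReal (inversion c R) s := by
  refine LipschitzOnWith.of_dist_le_mul fun x hx y hy => ?_
  have hxa := hs x hx
  have hya := hs y hy
  rw [dist_inversion_inversion (dist_pos.1 (ha.trans_le hxa))
    (dist_pos.1 (ha.trans_le hya)), Real.coe_toNNReal _ (by positivity)]
  gcongr
  rw [sq]
  exact mul_le_mul hxa hya ha.le dist_nonneg

theorem newtonKernel_inversion (hR : R ≠ 0) {x y : P} (hx : x ≠ c) (hy : y ≠ c) (a b : ℝ) :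
    (R ^ 2 / dist x c ^ 2) ^ 2 * ((R ^ 2 / dist y c ^ 2) ^ 2 *
      (-1 / (4 * π * dist (inversion c R x) (inversion c R y)) *
        (a * dist x c ^ 3 / R ^ 3) * (b * dist y c ^ 3 / R ^ 3))) =
      -1 / (4 * π * dist x y) * a * b := by
  have hxc : dist x c ≠ 0 := dist_ne_zero.2 hx
  have hyc : dist y c ≠ 0 := dist_ne_zero.2 hy
  rw [dist_inversion_inversion hx hy]
  rcases eq_or_ne x y with rfl | hxy
  · simp -- both kernels are the junk value `-1 / 0 = 0`
  · have : dist x y ≠ 0 := dist_ne_zero.2 hxy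
    field_simp

variable [MeasurableSpace P] [BorelSpace P]

theorem measurable_inversion : Measurable (inversion c R) :=
  measurable_of_continuousOn_compl_singleton c <|
    continuousOn_const.inversion continuousOn_const continuousOn_id fun _ hx => hx

variable (c) in
theorem measurableEmbedding_inversion (hR : R ≠ 0) : MeasurableEmbedding (inversion c R) :=
  (MeasurableEquiv.ofInvolutive _ (inversion_involutive c hR)
    measurable_inversion).measurableEmbedding

theorem hausdorffMeasure_image_inversion_le {s : Set P} {a d : ℝ} (ha : 0 < a) (hd : 0 ≤ d)
    (hs : ∀ x ∈ s, a ≤ dist x c) :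
    μH[d] (inversion c R '' s) ≤ ENNReal.ofReal (R ^ 2 / a ^ 2) ^ d * μH[d] s :=
  (lipschitzOnWith_inversion ha hs).hausdorffMeasure_image_le hd

theorem hausdorffMeasure_image_inversion_le_mul_setLIntegral {A : Set P} {a t d : ℝ}
    (ha : 0 < a) (ht : 0 < t) (hd : 0 ≤ d) (hAmeas : MeasurableSet A)
    (hshell : ∀ x ∈ A, a ≤ dist x c ∧ dist x c < t * a) :
    μH[d] (inversion c R '' A) ≤
      ENNReal.ofReal (t ^ 2) ^ d * ∫⁻ x in A, ENNReal.ofReal (R ^ 2 / dist x c ^ 2) ^ d ∂μH[d] :=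
  calc μH[d] (inversion c R '' A)
      ≤ ENNReal.ofReal (R ^ 2 / a ^ 2) ^ d * μH[d] A :=
        hausdorffMeasure_image_inversion_le ha hd fun x hx => (hshell x hx).1
    _ = ENNReal.ofReal (t ^ 2) ^ d *
          ∫⁻ _ in A, ENNReal.ofReal (R ^ 2 / (t * a) ^ 2) ^ d ∂μH[d] := by
        rw [setLIntegral_const, ← mul_assoc, ← ENNReal.mul_rpow_of_nonneg _ _ hd,
          ← ENNReal.ofReal_mul (by positivity)]
        congr 3
        field_simp
    _ ≤ ENNReal.ofReal (t ^ 2) ^ d *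
          ∫⁻ x in A, ENNReal.ofReal (R ^ 2 / dist x c ^ 2) ^ d ∂μH[d] := by
        gcongr _ * ?_
        refine setLIntegral_mono' hAmeas fun x hx => ?_
        have hxc := hshell x hx
        have : 0 < dist x c := ha.trans_le hxc.1
        gcongr
        exact hxc.2.le

theorem setLIntegral_le_mul_hausdorffMeasure_image_inversion (hR : R ≠ 0) {A : Set P}
    {a t d : ℝ} (ha : 0 < a) (ht : 0 < t) (hd : 0 ≤ d) (hAmeas : MeasurableSet A)
    (hshell : ∀ x ∈ A, a ≤ dist x c ∧ dist x c < t * a) :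
    ∫⁻ x in A, ENNReal.ofReal (R ^ 2 / dist x c ^ 2) ^ d ∂μH[d] ≤
      ENNReal.ofReal (t ^ 2) ^ d * μH[d] (inversion c R '' A) := by
  have himage : ∀ w ∈ inversion c R '' A, R ^ 2 / (t * a) ≤ dist w c := by
    rintro _ ⟨x, hx, rfl⟩
    have hxc := hshell x hx
    rw [dist_inversion_center]
    gcongr
    exacts [ha.trans_le hxc.1, hxc.2.le]
  calc ∫⁻ x in A, ENNReal.ofReal (R ^ 2 / dist x c ^ 2) ^ d ∂μH[d]
      ≤ ∫⁻ _ in A, ENNReal.ofReal (R ^ 2 / a ^ 2) ^ d ∂μH[d] := by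
        refine setLIntegral_mono' hAmeas fun x hx => ?_
        gcongr
        exact (hshell x hx).1
    _ = ENNReal.ofReal (R ^ 2 / a ^ 2) ^ d * μH[d] (inversion c R '' (inversion c R '' A)) := by
        rw [setLIntegral_const, image_image]
        simp only [inversion_inversion c hR, image_id']
    _ ≤ ENNReal.ofReal (R ^ 2 / a ^ 2) ^ d *
          (ENNReal.ofReal (R ^ 2 / (R ^ 2 / (t * a)) ^ 2) ^ d * μH[d] (inversion c R '' A)) := by
        gcongr
        exact hausdorffMeasure_image_inversion_le (by positivity) hd himage
    _ = ENNReal.ofReal (t ^ 2) ^ d * μH[d] (inversion c R '' A) := by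
        rw [← mul_assoc, ← ENNReal.mul_rpow_of_nonneg _ _ hd, ← ENNReal.ofReal_mul (by positivity)]
        congr 3
        field_simp

theorem hausdorffMeasure_image_inversion (hR : R ≠ 0) {d : ℝ} (hd : 0 ≤ d) {s : Set P}
    (hs : MeasurableSet s) (hc : c ∉ s) :
    μH[d] (inversion c R '' s) = ∫⁻ x in s, ENNReal.ofReal (R ^ 2 / dist x c ^ 2) ^ d ∂μH[d] := by
  have himage : ∀ A, MeasurableSet A →
      μH[d].map (inversion c R) A = μH[d] (inversion c R '' A) := fun A hA => by
    rw [Measure.map_apply measurable_inversion hA, image_eq_preimage_of_inverse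
      (inversion_involutive c hR) (inversion_involutive c hR)]
  have hfactor : Tendsto (fun t : ℝ => ENNReal.ofReal (t ^ 2) ^ d) (𝓝[>] 1) (𝓝 1) := by
    have hcont : Continuous fun t : ℝ => ENNReal.ofReal (t ^ 2) ^ d :=
      ENNReal.continuous_rpow_const.comp (ENNReal.continuous_ofReal.comp (continuous_pow 2))
    simpa using (hcont.tendsto 1).mono_left nhdsWithin_le_nhds
  rw [← himage s hs, ← withDensity_apply _ hs]
  refine le_antisymm
    (ENNReal.le_of_forall_one_lt_le_mul hfactor fun t ht =>
      measure_le_mul_of_forall_shell hs hc ht fun A hA a ha hshell => ?_)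
    (ENNReal.le_of_forall_one_lt_le_mul hfactor fun t ht =>
      measure_le_mul_of_forall_shell hs hc ht fun A hA a ha hshell => ?_)
  · rw [himage A hA, withDensity_apply _ hA]
    exact hausdorffMeasure_image_inversion_le_mul_setLIntegral ha (by linarith) hd hA hshell
  · rw [himage A hA, withDensity_apply _ hA]
    exact setLIntegral_le_mul_hausdorffMeasure_image_inversion hR ha (by linarith) hd hA hshell

theorem restrict_image_inversion (hR : R ≠ 0) {d : ℝ} (hd : 0 ≤ d) {s : Set P}
    (hs : MeasurableSet s) (hc : c ∉ s) :
    μH[d].restrict (inversion c R '' s) =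
      ((μH[d].restrict s).withDensity fun x => ENNReal.ofReal (R ^ 2 / dist x c ^ 2) ^ d).map
        (inversion c R) := by
  ext A hA
  have hpre : MeasurableSet (inversion c R ⁻¹' A) := measurable_inversion hA
  have hset : A ∩ inversion c R '' s = inversion c R '' (inversion c R ⁻¹' A ∩ s) := by
    rw [image_inter (inversion_injective c hR),
      image_preimage_eq A (inversion_surjective c hR)]
  rw [Measure.restrict_apply hA, Measure.map_apply measurable_inversion hA,
    withDensity_apply _ hpre, Measure.restrict_restrict hpre, hset,
    hausdorffMeasure_image_inversion hR hd (hpre.inter hs) fun hc' => hc hc'.2]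

theorem integral_image_inversion {E : Type*} [NormedAddCommGroup E] [NormedSpace ℝ E]
    (hR : R ≠ 0) {d : ℝ} (hd : 0 ≤ d) {s : Set P} (hs : MeasurableSet s) (hc : c ∉ s)
    (f : P → E) :
    ∫ w in inversion c R '' s, f w ∂μH[d] =
      ∫ x in s, (R ^ 2 / dist x c ^ 2) ^ d • f (inversion c R x) ∂μH[d] := by
  have hdensity : Measurable fun x => ENNReal.ofReal (R ^ 2 / dist x c ^ 2) ^ d := by
    fun_prop
  rw [restrict_image_inversion hR hd hs hc,
    (measurableEmbedding_inversion c hR).integral_map,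
    integral_withDensity_eq_integral_toReal_smul hdensity
      (ae_of_all _ fun _ => ENNReal.rpow_lt_top_of_nonneg hd ENNReal.ofReal_ne_top)]
  congr with x
  rw [← ENNReal.toReal_rpow, ENNReal.toReal_ofReal (by positivity)]

end EuclideanGeometry

open EuclideanGeometry

theorem bilinear_form_inversion_invariance_dim3_general
    (r : ℝ) (hr : 0 < r) (Ω : Set (EuclideanSpace ℝ (Fin 3)))
    (h0 : (0 : EuclideanSpace ℝ (Fin 3)) ∉ frontier Ω)
    (T : EuclideanSpace ℝ (Fin 3) → EuclideanSpace ℝ (Fin 3))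
    (hT : ∀ x : EuclideanSpace ℝ (Fin 3), x ≠ 0 → T x = (r ^ 2 / ‖x‖ ^ 2) • x)
    (σ σs : Measure (EuclideanSpace ℝ (Fin 3)))
    (hσ : σ = μH[2].restrict (frontier Ω))
    (hσs : σs = μH[2].restrict (T '' frontier Ω))
    (φ ψ : EuclideanSpace ℝ (Fin 3) → ℝ)
    (φs ψs : EuclideanSpace ℝ (Fin 3) → ℝ)
    (hφs : ∀ y ∈ frontier Ω, φs (T y) = φ y * ‖y‖ ^ 3 / r ^ 3)
    (hψs : ∀ y ∈ frontier Ω, ψs (T y) = ψ y * ‖y‖ ^ 3 / r ^ 3) :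
    ∫ w, ∫ z, (-1 / (4 * π * ‖w - z‖)) * φs w * ψs z ∂σs ∂σs =
      ∫ x, ∫ y, (-1 / (4 * π * ‖x - y‖)) * φ x * ψ y ∂σ ∂σ := by
  have hS : MeasurableSet (frontier Ω) := isClosed_frontier.measurableSet
  have hT' : ∀ x ∈ frontier Ω, T x = inversion 0 r x := fun x hx => by
    rw [hT x (ne_of_mem_of_not_mem hx h0), inversion, dist_zero_right, div_pow]
    simp
  rw [image_congr hT'] at hσs
  subst hσ hσs
  rw [integral_image_inversion hr.ne' zero_le_two hS h0]
  refine setIntegral_congr_fun hS fun x hx => ?_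
  rw [integral_image_inversion hr.ne' zero_le_two hS h0, ← integral_smul]
  refine setIntegral_congr_fun hS fun y hy => ?_
  have hx0 : x ≠ 0 := ne_of_mem_of_not_mem hx h0
  have hy0 : y ≠ 0 := ne_of_mem_of_not_mem hy h0
  simp only [smul_eq_mul, Real.rpow_two]
  rw [← hT' x hx, ← hT' y hy, hφs x hx, hψs y hy, hT' x hx, hT' y hy, ← dist_eq_norm,
    ← dist_eq_norm, ← dist_zero_right x, ← dist_zero_right y]
  exact newtonKernel_inversion hr.ne' hx0 hy0 _ _

/-- The map `φ ↦ φ*` preserves the single-layer bilinear form in three dimensions: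
`∫∫ Γ(w−z) φ*(w) ψ*(z) dσ*(z) dσ*(w) = ∫∫ Γ(x−y) φ(x) ψ(y) dσ(y) dσ(x)`,
where `Γ(z) = −1/(4π|z|)` and `φ*(Ty) = φ(y)|y|³/r³`. -/
theorem bilinear_form_inversion_invariance_dim3
    (r : ℝ) (hr : 0 < r) (Ω : Set (EuclideanSpace ℝ (Fin 3)))
    (hopen : IsOpen Ω) (hbd : Bornology.IsBounded Ω)
    (h0 : (0 : EuclideanSpace ℝ (Fin 3)) ∉ frontier Ω)
    (T : EuclideanSpace ℝ (Fin 3) → EuclideanSpace ℝ (Fin 3))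
    (hT : ∀ x : EuclideanSpace ℝ (Fin 3), x ≠ 0 → T x = (r ^ 2 / ‖x‖ ^ 2) • x)
    (σ σs : Measure (EuclideanSpace ℝ (Fin 3)))
    (hσ : σ = μH[2].restrict (frontier Ω))
    (hσs : σs = μH[2].restrict (T '' frontier Ω))
    (hfin : σ (frontier Ω) < ⊤)
    (φ ψ : EuclideanSpace ℝ (Fin 3) → ℝ)
    (hφmeas : Measurable φ) (hψmeas : Measurable ψ)
    (hφbdd : ∃ C, ∀ y, |φ y| ≤ C) (hψbdd : ∃ C, ∀ y, |ψ y| ≤ C)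
    (φs ψs : EuclideanSpace ℝ (Fin 3) → ℝ)
    (hφs : ∀ y ∈ frontier Ω, φs (T y) = φ y * ‖y‖ ^ 3 / r ^ 3)
    (hψs : ∀ y ∈ frontier Ω, ψs (T y) = ψ y * ‖y‖ ^ 3 / r ^ 3)
    (hint : Integrable
      (fun q : EuclideanSpace ℝ (Fin 3) × EuclideanSpace ℝ (Fin 3) =>
        (-1 / (4 * π * ‖q.1 - q.2‖)) * φ q.1 * ψ q.2) (σ.prod σ)) :
    ∫ w, ∫ z, (-1 / (4 * π * ‖w - z‖)) * φs w * ψs z ∂σs ∂σs =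
      ∫ x, ∫ y, (-1 / (4 * π * ‖x - y‖)) * φ x * ψ y ∂σ ∂σ :=
  bilinear_form_inversion_invariance_dim3_general r hr Ω h0 T hT σ σs hσ hσs φ ψ φs ψs hφs hψs
end
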